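/- arXiv:2505.01244 — 4 statements merged into one kernel-verified Lean document; each statement's English description precedes it below -/
import Mathlib

section
/- Fix m, l ∈ ℕ and grid points x_{i+k} for k = −m,…,l with Σ_{k=−m}^{l} cos²(x_{i+k}) > 0. Let D be the N×(m+l+1) matrix with entries D_{kj} = e^{−c t_k} cos(x_{i+j}) and d the vector with entries d_k = cos(x_i) e^{−cΔt} e^{−c t_k}, where the t_k ∈ ℝ are not all giving zero vector (c ∈ ℝ, at least one t_k). Then the minimum-norm least squares solution is β_j = e^{−cΔt} cos(x_{i+j}) cos(x_i) / (Σ_{k=−m}^{l} cos²(x_{i+k})). -/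
/-!
The data matrix has rank one, `D = w aᵀ` with `w k = e^{-c t_k}` and `a j = cos x_{i+j}`, and the
right-hand side is `d = s w` with `s = e^{-cΔt} cos x_i`. Hence the residual of `v` is
`(a ⬝ v - s) w`, so the least-squares solutions are exactly the solutions of the single equation
`a ⬝ v = s`, all with zero residual. By Cauchy–Schwarz each of them has `‖v‖² ≥ s² / ‖a‖²`, with
equality at `v = (s / ‖a‖²) a`, which is the claimed `β`.
-/

open Finset Matrix

section RankOneLeastSquares

variable {ι κ : Type*} [Fintype ι]

def residualSq [Fintype κ] (D : Matrix κ ι ℝ) (d : κ → ℝ) (v : ι → ℝ) : ℝ :=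
  ∑ i, ((D *ᵥ v) i - d i) ^ 2

theorem sq_dotProduct_div_le_sum_sq (a v : ι → ℝ) :
    (a ⬝ᵥ v) ^ 2 / ∑ j, a j ^ 2 ≤ ∑ j, v j ^ 2 :=
  div_le_of_le_mul₀ (sum_nonneg fun _ _ => sq_nonneg _) (sum_nonneg fun _ _ => sq_nonneg _)
    ((sum_mul_sq_le_sq_mul_sq univ a v).trans_eq (mul_comm _ _))

theorem vecMulVec_mulVec_sub_smul (w : κ → ℝ) (a v : ι → ℝ) (s : ℝ) :
    vecMulVec w a *ᵥ v - s • w = (a ⬝ᵥ v - s) • w := by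
  rw [vecMulVec_mulVec, op_smul_eq_smul, sub_smul]

theorem residualSq_vecMulVec [Fintype κ] (w : κ → ℝ) (a v : ι → ℝ) (s : ℝ) :
    residualSq (vecMulVec w a) (s • w) v = (a ⬝ᵥ v - s) ^ 2 * (w ⬝ᵥ w) := by
  have hres := congrFun (vecMulVec_mulVec_sub_smul w a v s)
  simp only [Pi.sub_apply, Pi.smul_apply, smul_eq_mul] at hres
  simp only [residualSq, Pi.smul_apply, smul_eq_mul, hres, dotProduct, mul_sum]
  exact sum_congr rfl fun _ _ => by ring

theorem residualSq_vecMulVec_eq_zero_iff [Fintype κ] {w : κ → ℝ} (hw : w ≠ 0) (a v : ι → ℝ)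
    (s : ℝ) :
    residualSq (vecMulVec w a) (s • w) v = 0 ↔ a ⬝ᵥ v = s := by
  simp [residualSq_vecMulVec, dotProduct_self_eq_zero, hw, sub_eq_zero]

theorem dotProduct_smul_self_div (a : ι → ℝ) (ha : 0 < ∑ j, a j ^ 2) (s : ℝ) :
    a ⬝ᵥ ((s / ∑ j, a j ^ 2) • a) = s := by
  have : a ⬝ᵥ a = ∑ j, a j ^ 2 := by simp only [dotProduct, sq]
  rw [dotProduct_smul, this, smul_eq_mul, div_mul_cancel₀ _ ha.ne']

theorem sum_sq_smul_self_div (a : ι → ℝ) (s : ℝ) :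
    ∑ j, ((s / ∑ j, a j ^ 2) • a) j ^ 2 = s ^ 2 / ∑ j, a j ^ 2 := by
  simp only [Pi.smul_apply, smul_eq_mul, mul_pow, ← mul_sum]
  rcases eq_or_ne (∑ j, a j ^ 2) 0 with h | h
  · simp [h]
  · field_simp

theorem minNorm_leastSquares_vecMulVec [Fintype κ] {w : κ → ℝ} (hw : w ≠ 0) {a : ι → ℝ}
    (ha : 0 < ∑ j, a j ^ 2) (s : ℝ) :
    (∀ β', residualSq (vecMulVec w a) (s • w) ((s / ∑ j, a j ^ 2) • a) ≤
        residualSq (vecMulVec w a) (s • w) β') ∧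
    (∀ β', residualSq (vecMulVec w a) (s • w) β' =
        residualSq (vecMulVec w a) (s • w) ((s / ∑ j, a j ^ 2) • a) →
      ∑ j, ((s / ∑ j, a j ^ 2) • a) j ^ 2 ≤ ∑ j, β' j ^ 2) := by
  have hβ : residualSq (vecMulVec w a) (s • w) ((s / ∑ j, a j ^ 2) • a) = 0 :=
    (residualSq_vecMulVec_eq_zero_iff hw a _ s).2 (dotProduct_smul_self_div a ha s)
  refine ⟨fun β' => hβ.trans_le (sum_nonneg fun _ _ => sq_nonneg _), fun β' hβ' => ?_⟩
  have hdot : a ⬝ᵥ β' = s := (residualSq_vecMulVec_eq_zero_iff hw a β' s).1 (hβ'.trans hβ)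
  rw [sum_sq_smul_self_div, ← hdot]
  exact sq_dotProduct_div_le_sum_sq a β'

end RankOneLeastSquares

/-- Minimum-norm least-squares solution for the 1D linear diffusion data
`u(x,t) = cos(x) e^{-ct}`. The stencil points are `xs j`, `j : Fin (m+l+1)`,
with center value `xi`; `D k j = e^{-c t_k} cos(xs j)` and
`d k = cos(xi) e^{-cΔt} e^{-c t_k}`. -/
theorem min_norm_ls_solution_linear_diffusion
    (m l N : ℕ) (hN : 0 < N)
    (c Δt xi : ℝ) (xs : Fin (m + l + 1) → ℝ) (t : Fin N → ℝ)
    (hpos : 0 < ∑ k, Real.cos (xs k) ^ 2)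
    (D : Matrix (Fin N) (Fin (m + l + 1)) ℝ)
    (hD : ∀ k j, D k j = Real.exp (-c * t k) * Real.cos (xs j))
    (d : Fin N → ℝ)
    (hd : ∀ k, d k = Real.cos xi * Real.exp (-c * Δt) * Real.exp (-c * t k))
    (β : Fin (m + l + 1) → ℝ)
    (hβ : ∀ j, β j = Real.exp (-c * Δt) * Real.cos (xs j) * Real.cos xi /
        ∑ k, Real.cos (xs k) ^ 2) :
    (∀ β' : Fin (m + l + 1) → ℝ,
      ∑ i, (D.mulVec β i - d i) ^ 2 ≤ ∑ i, (D.mulVec β' i - d i) ^ 2) ∧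
    (∀ β' : Fin (m + l + 1) → ℝ,
      (∑ i, (D.mulVec β' i - d i) ^ 2 = ∑ i, (D.mulVec β i - d i) ^ 2) →
      ∑ j, (β j) ^ 2 ≤ ∑ j, (β' j) ^ 2) := by
  set w : Fin N → ℝ := fun k => Real.exp (-c * t k)
  set s := Real.exp (-c * Δt) * Real.cos xi
  have hw : w ≠ 0 := Function.ne_iff.2 ⟨⟨0, hN⟩, (Real.exp_pos _).ne'⟩
  obtain rfl : D = vecMulVec w (fun j => Real.cos (xs j)) := by ext k j; exact hD k j
  obtain rfl : d = s • w := by ext k; simp only [hd, Pi.smul_apply, smul_eq_mul, w, s]; ring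
  obtain rfl : β = (s / ∑ k, Real.cos (xs k) ^ 2) • (fun j => Real.cos (xs j)) := by
    ext j; simp only [hβ, Pi.smul_apply, smul_eq_mul, s]; ring
  simpa only [residualSq] using minNorm_leastSquares_vecMulVec hw hpos s
end

section
/- Fix m = l ∈ ℕ, m ≥ 1, Δx, Δt > 0, and a real speed c. Consider the symmetric stencil coefficients β_j = (K₁ + j K₂) / Q for j = −m,…,m, where Q = (ab − d²)(c₁c₂ − c₃²) > 0, c₁ = 2m+1, c₂ = m(m+1)(2m+1)/3, c₃ = 0, and for linear advection (u_t = c u_x, so g = c·d, e = c·b): K₁ = c₂(ab − d²), K₂ = (c₁Δt/Δx)·c·(ab − d²). Then Σ_{j=−m}^{m} |β_j| ≤ 1 holds whenever Δt/Δx ≤ (m+1)/(3|c|), provided ab − d² > 0. -/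
/-- Sampling CFL condition for 1D linear advection with a symmetric
(2m+1)-point stencil (Eq. (35)). -/
theorem sampling_CFL_linear_advection
    (m : ℕ) (hm : 1 ≤ m) (Δx Δt : ℝ) (hΔx : 0 < Δx) (hΔt : 0 < Δt)
    (c a b d : ℝ) (habd : 0 < a * b - d ^ 2)
    (c₁ c₂ Q K₁ K₂ : ℝ)
    (hc₁ : c₁ = 2 * m + 1)
    (hc₂ : c₂ = m * (m + 1) * (2 * m + 1) / 3)
    (hQ : Q = (a * b - d ^ 2) * (c₁ * c₂ - 0 ^ 2))
    (hK₁ : K₁ = c₂ * (a * b - d ^ 2))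
    (hK₂ : K₂ = (c₁ * Δt / Δx) * c * (a * b - d ^ 2))
    (hCFL : Δt / Δx ≤ (m + 1) / (3 * |c|)) :
    ∑ j ∈ Finset.Icc (-(m : ℤ)) m, |(K₁ + j * K₂) / Q| ≤ 1 := by
  have hm1 : (1:ℝ) ≤ (m:ℝ) := by exact_mod_cast hm
  have hc₁pos : 0 < c₁ := by rw [hc₁]; nlinarith
  have hm0 : (0:ℝ) < (m:ℝ) := by linarith
  have hc₂pos : 0 < c₂ := by rw [hc₂]; positivity
  have hQpos : 0 < Q := by
    have h0 : c₁ * c₂ - 0 ^ 2 = c₁ * c₂ := by ring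
    rw [hQ, h0]
    exact mul_pos habd (mul_pos hc₁pos hc₂pos)
  -- |c| * (Δt/Δx) ≤ (m+1)/3
  have hdt : 0 ≤ Δt / Δx := le_of_lt (div_pos hΔt hΔx)
  have hcfl2 : |c| * (Δt / Δx) ≤ ((m:ℝ) + 1) / 3 := by
    rcases eq_or_ne c 0 with rfl | hc
    · simp only [abs_zero, zero_mul]; positivity
    · have hcpos : 0 < |c| := abs_pos.mpr hc
      have h3c : 0 < 3 * |c| := by linarith
      rw [div_le_div_iff₀ hΔx h3c] at hCFL
      rw [mul_comm, div_mul_eq_mul_div, div_le_div_iff₀ hΔx (by norm_num : (0:ℝ) < 3)]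
      nlinarith [hCFL]
  -- m * |K₂| ≤ K₁
  have hK2abs : (m:ℝ) * |K₂| ≤ K₁ := by
    have h2 : |K₂| = c₁ * (Δt / Δx) * |c| * (a*b - d^2) := by
      rw [hK₂]
      rw [abs_mul, abs_mul, abs_of_pos habd, abs_of_nonneg (by positivity : (0:ℝ) ≤ c₁ * Δt / Δx)]
      ring
    rw [h2, hK₁, hc₂]
    have : (m:ℝ) * (c₁ * (Δt / Δx) * |c| * (a*b - d^2))
        = (m:ℝ) * c₁ * (|c| * (Δt/Δx)) * (a*b - d^2) := by ring
    rw [this]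
    have hmc : 0 ≤ (m:ℝ) * c₁ := by positivity
    have := mul_le_mul_of_nonneg_left hcfl2 hmc
    have h3 : (m:ℝ) * c₁ * (((m:ℝ)+1)/3) * (a*b-d^2) = (m:ℝ)*((m:ℝ)+1)*(2*(m:ℝ)+1)/3 * (a*b-d^2) := by
      rw [hc₁]; ring
    nlinarith [mul_le_mul_of_nonneg_right this habd.le]
  have hnn : ∀ j ∈ Finset.Icc (-(m:ℤ)) (m:ℤ), 0 ≤ K₁ + (j:ℝ) * K₂ := by
    intro j hj
    simp only [Finset.mem_Icc] at hj
    have hjabs : |(j:ℝ)| ≤ (m:ℝ) := by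
      rw [← Int.cast_natCast, ← Int.cast_abs]
      exact_mod_cast abs_le.mpr hj
    have h1 : |(j:ℝ) * K₂| ≤ (m:ℝ) * |K₂| := by
      rw [abs_mul]
      exact mul_le_mul_of_nonneg_right hjabs (abs_nonneg _)
    have := neg_abs_le ((j:ℝ) * K₂)
    linarith
  have hrw : ∑ j ∈ Finset.Icc (-(m:ℤ)) (m:ℤ), |(K₁ + (j:ℝ) * K₂) / Q|
      = ∑ j ∈ Finset.Icc (-(m:ℤ)) (m:ℤ), (K₁ + (j:ℝ) * K₂) / Q := by
    refine Finset.sum_congr rfl fun j hj => ?_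
    exact abs_of_nonneg (div_nonneg (hnn j hj) hQpos.le)
  rw [hrw, ← Finset.sum_div, div_le_one hQpos]
  have hsum0 : ∑ j ∈ Finset.Icc (-(m:ℤ)) (m:ℤ), ((j:ℝ)) = 0 := by
    apply Finset.sum_involution (fun j _ => -j)
    · intro j hj; push_cast; ring
    · intro j hj h hne
      apply h
      have hj0 : j = 0 := by omega
      simp [hj0]
    · intro j hj; ring
    · intro j hj; simp only [Finset.mem_Icc] at hj ⊢; omega
  have hcard : (Finset.Icc (-(m:ℤ)) (m:ℤ)).card = 2 * m + 1 := by
    rw [Int.card_Icc]; omega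
  have hsplit : ∑ j ∈ Finset.Icc (-(m:ℤ)) (m:ℤ), (K₁ + (j:ℝ) * K₂)
      = (2 * (m:ℝ) + 1) * K₁ := by
    rw [Finset.sum_add_distrib, Finset.sum_const, hcard, ← Finset.sum_mul, hsum0]
    push_cast; ring
  rw [hsplit, hQ, hK₁, hc₁]
  nlinarith [habd.le]
end

section
/- For m ≥ 1 and real r with 0 ≤ r ≤ c₂/(c₁ m) = (m+1)/3, where c₁ = 2m+1 and c₂ = m(m+1)(2m+1)/3, we have Σ_{j=−m}^{m} |c₂ + j c₁ r| = (2m+1)c₂, and hence the normalized sum Σ_{j=−m}^{m} |c₂ + j·c₁·r| / (c₁c₂) equals 1. -/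
theorem sampling_CFL_key_sum (m : ℕ) (hm : 1 ≤ m) (r : ℝ) (hr : 0 ≤ r)
    (c₁ c₂ : ℝ) (hc₁ : c₁ = 2 * m + 1)
    (hc₂ : c₂ = m * (m + 1) * (2 * m + 1) / 3)
    (hCFL : r ≤ (m + 1) / 3) :
    (∑ j ∈ Finset.Icc (-(m : ℤ)) m, |c₂ + j * c₁ * r|) = (2 * m + 1) * c₂ ∧
    (∑ j ∈ Finset.Icc (-(m : ℤ)) m, |c₂ + j * c₁ * r|) / (c₁ * c₂) = 1 := by
  have hm1 : (1:ℝ) ≤ m := by exact_mod_cast hm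
  have hc₁pos : 0 < c₁ := by rw [hc₁]; nlinarith
  have hc₂pos : 0 < c₂ := by rw [hc₂]; nlinarith [hm1, sq_nonneg ((m:ℝ))]
  have habs : ∀ j ∈ Finset.Icc (-(m : ℤ)) m, |c₂ + j * c₁ * r| = c₂ + j * c₁ * r := by
    intro j hj
    simp only [Finset.mem_Icc] at hj
    apply abs_of_nonneg
    have hjl : -(m:ℝ) ≤ (j:ℝ) := by exact_mod_cast hj.1
    have : -(m:ℝ) * c₁ * r ≤ (j:ℝ) * c₁ * r := by
      apply mul_le_mul_of_nonneg_right _ hr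
      exact mul_le_mul_of_nonneg_right hjl hc₁pos.le
    have hc : 0 ≤ c₂ - (m:ℝ) * c₁ * r := by
      rw [hc₂, hc₁]; nlinarith
    linarith
  rw [Finset.sum_congr rfl habs]
  have hsumj : ∑ j ∈ Finset.Icc (-(m : ℤ)) m, (j:ℝ) = 0 := by
    apply Finset.sum_involution (fun j _ => -j)
    · intro a ha; push_cast; ring
    · intro a ha hfa; intro h
      apply hfa
      have : a = 0 := by omega
      simp [this]
    · intro a ha; omega
    · intro a ha
      rw [Finset.mem_Icc] at ha ⊢
      omega
  have hcard : (Finset.Icc (-(m : ℤ)) m).card = 2 * m + 1 := by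
    rw [Int.card_Icc]; omega
  have hsum : ∑ j ∈ Finset.Icc (-(m : ℤ)) m, (c₂ + j * c₁ * r) = (2 * m + 1) * c₂ := by
    rw [Finset.sum_add_distrib, Finset.sum_const, hcard]
    have : ∑ j ∈ Finset.Icc (-(m : ℤ)) m, (j:ℝ) * c₁ * r
        = (∑ j ∈ Finset.Icc (-(m : ℤ)) m, (j:ℝ)) * c₁ * r := by
      rw [Finset.sum_mul, Finset.sum_mul]
    rw [this, hsumj]
    ring
  refine ⟨hsum, ?_⟩
  rw [hsum, hc₁]
  field_simp
end

section
/- Let β ∈ ℝ³ be given by β = ((1 − cΔt)/(3 + 2(tan(x)Δx)²)) · (1 + tan(x)Δx, 1, 1 − tan(x)Δx) for real x with cos x ≠ 0, Δx, Δt > 0 and c ≥ 0 with cΔt ≤ 1. Then ‖β‖₁ ≤ 1 (for both |tan(x)| ≤ 1/Δx and |tan(x)| ≥ 1/Δx). -/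
/-- Gershgorin-type l1 stability bound for the approximate 3-point
diffusion scheme (Eq. (22)). -/
theorem l1_stability_approx_three_point_scheme
    (c Δt Δx x : ℝ) (hcosx : Real.cos x ≠ 0)
    (hΔx : 0 < Δx) (hΔt : 0 < Δt) (hc : 0 ≤ c) (hcΔt : c * Δt ≤ 1)
    (τ f : ℝ) (hτ : τ = Real.tan x * Δx)
    (hf : f = (1 - c * Δt) / (3 + 2 * τ ^ 2)) :
    |f * (1 + τ)| + |f| + |f * (1 - τ)| ≤ 1 := by
  have hden : (0:ℝ) < 3 + 2 * τ ^ 2 := by positivity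
  have hnum : 0 ≤ 1 - c * Δt := by linarith
  have hf0 : 0 ≤ f := by rw [hf]; positivity
  have hfa : |f| = f := abs_of_nonneg hf0
  rw [abs_mul, abs_mul, hfa]
  have hfle : f * (3 + 2 * τ ^ 2) ≤ 1 := by
    have hct : 0 ≤ c * Δt := mul_nonneg hc hΔt.le
    rw [hf, div_mul_cancel₀ _ (ne_of_gt hden)]; linarith
  rcases abs_cases (1 + τ) with ⟨h1, _⟩ | ⟨h1, _⟩ <;>
    rcases abs_cases (1 - τ) with ⟨h2, _⟩ | ⟨h2, _⟩ <;>
    rw [h1, h2] <;> nlinarith [sq_nonneg τ, sq_nonneg (τ - 1), sq_nonneg (τ + 1), mul_nonneg hf0 (sq_nonneg τ)]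
end
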